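/- arXiv:1012.3260 — 3 statements merged into one kernel-verified Lean document; each statement's English description precedes it below -/
import Mathlib

section
/- Let M and N be loopfree matroids on the same ground set E such that every flat of N is also a flat of M. Then for any subsets A ⊆ B of E, rank_M(A) − rank_N(A) ≤ rank_M(B) − rank_N(B). -/
/-- A matroid given by its rank function on subsets of a finite ground set. -/
structure MatroidRank (α : Type) [DecidableEq α] [Fintype α] where
  r : Finset α → ℕ
  r_empty : r ∅ = 0
  r_le_insert : ∀ A x, r A ≤ r (insert x A)
  insert_le : ∀ A x, r (insert x A) ≤ r A + 1
  r_local : ∀ A x y, r (insert x A) = r A → r (insert y A) = r A →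
    r (insert x (insert y A)) = r A

variable {α : Type} [DecidableEq α] [Fintype α]

/-- `F` is a flat (closed set) of the matroid `M`. -/
def MatroidRank.IsFlat (M : MatroidRank α) (F : Finset α) : Prop :=
  ∀ x ∉ F, M.r F < M.r (insert x F)

/-- Closure of a set in the matroid `M`. -/
def MatroidRank.cl (M : MatroidRank α) (A : Finset α) : Finset α :=
  Finset.univ.filter (fun x => M.r (insert x A) = M.r A)

/-- The matroid `M` has no loops. -/
def MatroidRank.Loopfree (M : MatroidRank α) : Prop :=
  ∀ x : α, M.r {x} = 1

/-!
Adding a point `x` to a set `C` raises each rank by at most one. If it does not raise the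
`M`-rank, then `x` lies in the `M`-closure of `C`; that closure is contained in the `N`-closure
of `C`, because the latter is an `N`-flat, hence an `M`-flat, containing `C`. So the `N`-rank does
not rise either, and `r_M - r_N` can only grow along insertions.
-/

namespace MatroidRank

variable (M : MatroidRank α)

theorem r_mono : Monotone M.r :=
  Finset.monotone_iff_forall_le_insert.2 fun A x _ => M.r_le_insert A x

theorem mem_cl_iff {A : Finset α} {x : α} : x ∈ M.cl A ↔ M.r (insert x A) = M.r A := by
  simp [cl]

theorem mem_cl_insert {A : Finset α} {x : α} (y : α) (hx : x ∈ M.cl A) :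
    x ∈ M.cl (insert y A) := by
  rw [mem_cl_iff] at hx ⊢
  rcases eq_or_ne (M.r (insert y A)) (M.r A) with hy | hy
  · rw [M.r_local A x y hx hy, hy]
  · have := M.r_le_insert A y
    have h_le : M.r (insert x (insert y A)) ≤ M.r (insert x A) + 1 := by
      rw [Finset.insert_comm]
      exact M.insert_le _ _
    have := M.r_le_insert (insert y A) x
    omega

theorem cl_mono : Monotone M.cl :=
  Finset.monotone_iff_forall_le_insert.2 fun _ y _ _ hx => M.mem_cl_insert y hx

theorem subset_cl (A : Finset α) : A ⊆ M.cl A := fun x hx => by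
  rw [mem_cl_iff, Finset.insert_eq_self.mpr hx]

theorem r_union_eq_of_subset_cl {A S : Finset α} (hS : S ⊆ M.cl A) : M.r (A ∪ S) = M.r A := by
  induction S using Finset.induction with
  | empty => simp
  | @insert y S _ ih =>
    rw [Finset.insert_subset_iff] at hS
    have hy : y ∈ M.cl (A ∪ S) := M.cl_mono Finset.subset_union_left hS.1
    rw [Finset.union_insert, (M.mem_cl_iff).1 hy, ih hS.2]

theorem r_cl (A : Finset α) : M.r (M.cl A) = M.r A := by
  simpa [Finset.union_eq_right.mpr (M.subset_cl A)] using
    M.r_union_eq_of_subset_cl (subset_refl (M.cl A))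

theorem cl_isFlat (A : Finset α) : M.IsFlat (M.cl A) := by
  intro x hx
  have := (M.mem_cl_iff).not.1 hx
  have := M.r_le_insert A x
  have := M.r_mono (Finset.insert_subset_insert x (M.subset_cl A))
  rw [M.r_cl]
  omega

variable {M} {N : MatroidRank α}

theorem cl_subset_cl_of_forall_isFlat (hflats : ∀ F, N.IsFlat F → M.IsFlat F) (C : Finset α) :
    M.cl C ⊆ N.cl C := by
  intro x hx
  by_contra hxN
  have h_lt := hflats _ (N.cl_isFlat C) x hxN
  have h_eq := (M.mem_cl_iff).1 (M.cl_mono (N.subset_cl C) hx)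
  omega

theorem r_sub_r_le_insert (hflats : ∀ F, N.IsFlat F → M.IsFlat F) (C : Finset α) (x : α) :
    (M.r C : ℤ) - N.r C ≤ (M.r (insert x C) : ℤ) - N.r (insert x C) := by
  by_cases hx : x ∈ M.cl C
  · rw [(M.mem_cl_iff).1 hx, (N.mem_cl_iff).1 (cl_subset_cl_of_forall_isFlat hflats C hx)]
  · have := (M.mem_cl_iff).not.1 hx
    have := M.r_le_insert C x
    have := N.insert_le C x
    omega

end MatroidRank

theorem rank_diff_mono_general (M N : MatroidRank α)
    (hflats : ∀ F, N.IsFlat F → M.IsFlat F)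
    (A B : Finset α) (hAB : A ⊆ B) :
    (M.r A : ℤ) - N.r A ≤ (M.r B : ℤ) - N.r B :=
  Finset.monotone_iff_forall_le_insert.2
    (fun C x _ => MatroidRank.r_sub_r_le_insert hflats C x) hAB

/-- If every flat of N is a flat of M, then for A ⊆ B,
rank_M(A) − rank_N(A) ≤ rank_M(B) − rank_N(B). -/
theorem rank_diff_mono (M N : MatroidRank α)
    (hM : M.Loopfree) (hN : N.Loopfree)
    (hflats : ∀ F, N.IsFlat F → M.IsFlat F)
    (A B : Finset α) (hAB : A ⊆ B) :
    (M.r A : ℤ) - N.r A ≤ (M.r B : ℤ) - N.r B :=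
  rank_diff_mono_general M N hflats A B hAB
end

section
/- Let p ∈ ℝ^E and let M be a matroid on the finite set E. Define M_p as the matroid whose bases are the bases B of M minimizing the weight Σ_{i∈B} p_i. Then for any vector v ∈ ℝ^E there exists ε₀ > 0 such that for all 0 < ε < ε₀, the matroid M_{p+εv} equals (M_p)_v. -/
variable {α : Type} [DecidableEq α] [Fintype α]

/-- `B` is a basis of `M`: an independent set of full rank. -/
def MatroidRank.IsBase (M : MatroidRank α) (B : Finset α) : Prop :=
  M.r B = B.card ∧ M.r B = M.r Finset.univ

/-- The weight of a finite set with respect to the weight vector `p`. -/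
def wt (p : α → ℝ) (B : Finset α) : ℝ := ∑ i ∈ B, p i

/-- `B` is a basis of the matroid `M_p`, i.e. a basis of `M` of minimal `p`-weight. -/
def MatroidRank.IsMinBase (M : MatroidRank α) (p : α → ℝ) (B : Finset α) : Prop :=
  M.IsBase B ∧ ∀ B₂, M.IsBase B₂ → wt p B ≤ wt p B₂

open Filter Topology

theorem eventually_add_mul_lt_add_mul_of_lt {ι : Type*} [Finite ι] (f g : ι → ℝ) :
    ∀ᶠ ε in 𝓝 (0 : ℝ), ∀ i j, f i < f j → f i + ε * g i < f j + ε * g j := by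
  refine eventually_all.2 fun i => eventually_all.2 fun j => eventually_imp_distrib_left.2 ?_
  intro hij
  exact ContinuousAt.eventually_lt (by fun_prop) (by fun_prop) (by simpa using hij)

theorem isMinOn_add_mul_iff {ι : Type*} {f g : ι → ℝ} {S : Set ι} {ε : ℝ} (hε : 0 < ε)
    (hlt : ∀ i j, f i < f j → f i + ε * g i < f j + ε * g j) {x : ι} (hx : x ∈ S) :
    IsMinOn (fun i => f i + ε * g i) S x ↔
      IsMinOn f S x ∧ IsMinOn g {y | y ∈ S ∧ IsMinOn f S y} x := by
  constructor
  · intro hmin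
    have hfmin : IsMinOn f S x := fun y hy =>
      not_lt.1 fun hyx => (hlt y x hyx).not_ge (hmin hy)
    refine ⟨hfmin, fun y ⟨hy, hymin⟩ => ?_⟩
    have hfxy : f x = f y := le_antisymm (hfmin hy) (hymin hx)
    have : f x + ε * g x ≤ f y + ε * g y := hmin hy
    exact le_of_mul_le_mul_left (by linarith) hε
  · rintro ⟨hfmin, hgmin⟩ y hy
    rcases lt_or_ge (f x) (f y) with hxy | hyx
    · exact (hlt x y hxy).le
    · have hfxy : f x = f y := le_antisymm (hfmin hy) hyx
      have hymin : IsMinOn f S y := fun z hz => hfxy ▸ hfmin hz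
      show f x + ε * g x ≤ f y + ε * g y
      rw [hfxy]
      gcongr
      exact hgmin ⟨hy, hymin⟩

theorem wt_add_mul {ι : Type} (p v : ι → ℝ) (ε : ℝ) (B : Finset ι) :
    wt (fun i => p i + ε * v i) B = wt p B + ε * wt v B := by
  simp only [wt, Finset.sum_add_distrib, Finset.mul_sum]

/-- For small ε > 0, the matroid M_{p+εv} equals (M_p)_v : its bases are the
v-minimal bases among the p-minimal bases of M. -/
theorem min_weight_base_perturbation (M : MatroidRank α) (p v : α → ℝ) :
    ∃ ε₀ > (0:ℝ), ∀ ε : ℝ, 0 < ε → ε < ε₀ →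
      ∀ B : Finset α,
        M.IsMinBase (fun i => p i + ε * v i) B ↔
          (M.IsMinBase p B ∧ ∀ B₂, M.IsMinBase p B₂ → wt v B ≤ wt v B₂) := by
  obtain ⟨ε₀, hε₀, hsmall⟩ :=
    Metric.eventually_nhds_iff.1 (eventually_add_mul_lt_add_mul_of_lt (wt p) (wt v))
  refine ⟨ε₀, hε₀, fun ε hε hεε₀ B => ?_⟩
  have hlt := hsmall (show dist ε 0 < ε₀ by rwa [Real.dist_0_eq_abs, abs_of_pos hε])
  unfold MatroidRank.IsMinBase
  simp only [wt_add_mul]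
  rw [and_assoc]
  exact and_congr_right fun hB => isMinOn_add_mul_iff (S := {B | M.IsBase B}) hε hlt hB
end

section
/- Let M be a loopfree matroid on E and let S be a proper nonempty subset of E. If every basis of M contains the same number of elements of S, then S is a separator of M, i.e. rank_M(S) + rank_M(E \ S) = rank_M(E). -/
variable {α : Type} [DecidableEq α] [Fintype α]

/-!
Extend a basis of `S` to a base `B` and a basis of `E \ S` to a base `B'`. Then
`|B ∩ S| = r S` and `|B' \ S| = r (E \ S)`, while `|B' ∩ S| = |B ∩ S|` by hypothesis, so
`r E = |B'| = |B' ∩ S| + |B' \ S| = r S + r (E \ S)`.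
-/

namespace MatroidRank

variable (M : MatroidRank α) {A I J : Finset α} {x : α}

def Indep (I : Finset α) : Prop :=
  M.r I = I.card

instance (I : Finset α) : Decidable (M.Indep I) :=
  inferInstanceAs (Decidable (M.r I = I.card))

lemma r_le_r_union (A T : Finset α) : M.r A ≤ M.r (A ∪ T) := by
  induction T using Finset.induction_on with
  | empty => simp
  | insert y T _ ih =>
    rw [Finset.union_insert]
    exact ih.trans (M.r_le_insert _ _)

lemma r_mono_s11 (h : A ⊆ J) : M.r A ≤ M.r J := by
  simpa [Finset.union_eq_right.mpr h] using M.r_le_r_union A J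

lemma r_union_le_add_card (A T : Finset α) : M.r (A ∪ T) ≤ M.r A + T.card := by
  induction T using Finset.induction_on with
  | empty => simp
  | insert y T hy ih =>
    rw [Finset.union_insert, Finset.card_insert_of_notMem hy]
    linarith [M.insert_le (A ∪ T) y]

lemma r_le_card (A : Finset α) : M.r A ≤ A.card := by
  simpa [M.r_empty] using M.r_union_le_add_card ∅ A

variable {M}

lemma Indep.subset (hJ : M.Indep J) (hIJ : I ⊆ J) : M.Indep I := by
  have hle := M.r_union_le_add_card I (J \ I)
  rw [Finset.union_sdiff_of_subset hIJ, Finset.card_sdiff_of_subset hIJ] at hle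
  have := M.r_le_card I
  have := Finset.card_le_card hIJ
  unfold Indep at *
  omega

lemma Indep.insert_of_r_lt (hI : M.Indep I) (hx : M.r I < M.r (insert x I)) :
    M.Indep (insert x I) := by
  have hxI : x ∉ I := fun h => hx.ne (by rw [Finset.insert_eq_self.mpr h])
  have := M.insert_le I x
  unfold Indep at *
  rw [Finset.card_insert_of_notMem hxI]
  omega

/-- The axiom `r_local`, iterated over the elements of `T`. -/
lemma r_union_eq_of_forall_r_insert_eq {C T : Finset α}
    (h : ∀ x ∈ T, M.r (insert x C) = M.r C) : M.r (C ∪ T) = M.r C := by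
  induction T using Finset.induction_on generalizing C with
  | empty => simp
  | insert y T _ ih =>
    have hyC : M.r (insert y C) = M.r C := h y (Finset.mem_insert_self y T)
    have hT : ∀ x ∈ T, M.r (insert x (insert y C)) = M.r (insert y C) := fun x hx => by
      rw [hyC]; exact M.r_local C x y (h x (Finset.mem_insert_of_mem hx)) hyC
    rw [Finset.union_insert, ← Finset.insert_union, ih hT, hyC]

/-- A maximum-size independent set between `I` and `A` spans `A`. -/
lemma Indep.exists_superset_subset_r_eq (hI : M.Indep I) (hIA : I ⊆ A) :
    ∃ J, I ⊆ J ∧ J ⊆ A ∧ M.Indep J ∧ M.r J = M.r A := by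
  obtain ⟨J, hJ, hmax⟩ := Finset.exists_max_image
    (A.powerset.filter fun J => I ⊆ J ∧ M.Indep J) Finset.card
    ⟨I, by simp [hIA, hI]⟩
  simp only [Finset.mem_filter, Finset.mem_powerset, and_imp] at hJ hmax
  obtain ⟨hJA, hIJ, hJ⟩ := hJ
  have hspan : ∀ x ∈ A, M.r (insert x J) = M.r J := by
    intro x hxA
    by_contra hne
    have hlt := lt_of_le_of_ne (M.r_le_insert J x) (Ne.symm hne)
    have hxJ : x ∉ J := fun h => hne (by rw [Finset.insert_eq_self.mpr h])
    have := hmax (insert x J) (Finset.insert_subset hxA hJA)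
      (hIJ.trans (Finset.subset_insert x J)) (hJ.insert_of_r_lt hlt)
    rw [Finset.card_insert_of_notMem hxJ] at this
    omega
  refine ⟨J, hIJ, hJA, hJ, ?_⟩
  rw [← r_union_eq_of_forall_r_insert_eq hspan, Finset.union_eq_right.mpr hJA]

variable (M)

lemma exists_isBase_card_inter_eq_r (A : Finset α) :
    ∃ B, M.IsBase B ∧ (B ∩ A).card = M.r A := by
  have hempty : M.Indep ∅ := by simp [Indep, M.r_empty]
  obtain ⟨J, -, hJA, hJ, hJr⟩ := hempty.exists_superset_subset_r_eq (Finset.empty_subset A)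
  obtain ⟨B, hJB, -, hB, hBr⟩ := hJ.exists_superset_subset_r_eq (Finset.subset_univ J)
  refine ⟨B, ⟨hB, hBr⟩, ?_⟩
  have hBA : M.Indep (B ∩ A) := hB.subset Finset.inter_subset_left
  have := M.r_mono_s11 (Finset.inter_subset_right : B ∩ A ⊆ A)
  have := Finset.card_le_card (Finset.subset_inter hJB hJA)
  unfold Indep at *
  omega

end MatroidRank

theorem separator_of_const_intersection_general (M : MatroidRank α)
    (S : Finset α)
    (k : ℕ) (hk : ∀ B, M.IsBase B → (B ∩ S).card = k) :
    M.r S + M.r (Finset.univ \ S) = M.r Finset.univ := by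
  obtain ⟨B, hB, hBS⟩ := M.exists_isBase_card_inter_eq_r S
  obtain ⟨B', hB', hB'S⟩ := M.exists_isBase_card_inter_eq_r (Finset.univ \ S)
  have hsplit : (B' ∩ S).card + (B' ∩ (Finset.univ \ S)).card = B'.card := by
    rw [← Finset.inter_sdiff_assoc, Finset.inter_univ, Finset.card_inter_add_card_sdiff]
  calc M.r S + M.r (Finset.univ \ S)
      = (B' ∩ S).card + (B' ∩ (Finset.univ \ S)).card := by rw [hk B' hB', ← hk B hB, hBS, hB'S]
    _ = M.r Finset.univ := by rw [hsplit, ← hB'.1, hB'.2]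

/-- If every basis of a loopfree matroid M meets S in the same number of
elements, then S is a separator. -/
theorem separator_of_const_intersection (M : MatroidRank α) (hM : M.Loopfree)
    (S : Finset α) (hne : S.Nonempty) (hproper : S ≠ Finset.univ)
    (k : ℕ) (hk : ∀ B, M.IsBase B → (B ∩ S).card = k) :
    M.r S + M.r (Finset.univ \ S) = M.r Finset.univ :=
  separator_of_const_intersection_general M S k hk
end
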